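/- arXiv:0803.2686 — 4 statements merged into one kernel-verified Lean document; each statement's English description precedes it below -/
import Mathlib

section
/- Let S be an anti-Hermitian operator and H any bounded operator on a finite-dimensional Hilbert space. Define the superoperator L(X) = [S, X] = SX - XS. Then for every k ≥ 0, the norm of the remainder of the Taylor expansion of e^S H e^{-S} satisfies ‖ e^S H e^{-S} - Σ_{p=0}^{k-1} (1/p!) L^p(H) ‖ ≤ (1/k!) ‖ L^k(H) ‖, where ‖·‖ is the operator norm. -/
/-!
Let `R_k X t` be the remainder of the order-`k` Taylor polynomial of `t ↦ e^{tS} X e^{-tS}`.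
Differentiating the conjugation produces the conjugation of `[S, X]`, so `R_{k+1} X` vanishes
at `0` with derivative `R_k [S, X]`. For `k = 0` the conjugating element is unitary, so
`‖R_0 X t‖ = ‖X‖`. The mean value inequality then propagates the bound
`‖R_k X t‖ ≤ t^k / k! ‖L^k X‖`, where `L = [S, ·]`, from `k` to `k + 1` for all `X` and `t ≥ 0`;
the theorem is the case `t = 1`.
-/

open scoped Matrix.Norms.L2Operator
open Matrix NormedSpace Finset Nat

section TaylorBound

theorem hasDerivAt_pow_succ_div_factorial_succ (p : ℕ) (t : ℝ) :
    HasDerivAt (fun s : ℝ => s ^ (p + 1) / (p + 1)!) (t ^ p / p !) t := by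
  refine ((hasDerivAt_pow (p + 1) t).div_const _).congr_deriv ?_
  push_cast [factorial_succ, add_tsub_cancel_right]
  field_simp

variable {E : Type*} [NormedAddCommGroup E] [NormedSpace ℝ E]

theorem hasDerivAt_sum_range_pow_div_factorial_smul (c : ℕ → E) (k : ℕ) (t : ℝ) :
    HasDerivAt (fun s : ℝ => ∑ p ∈ range (k + 1), (s ^ p / p !) • c p)
      (∑ p ∈ range k, (t ^ p / p !) • c (p + 1)) t := by
  simp only [sum_range_succ' _ k, pow_zero, factorial_zero, cast_one, div_one, one_smul]
  exact (HasDerivAt.fun_sum fun p _ =>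
    (hasDerivAt_pow_succ_div_factorial_succ p t).smul_const (c (p + 1))).add_const (c 0)

theorem norm_le_pow_succ_div_factorial_of_norm_deriv_le {f f' : ℝ → E} {C : ℝ} {k : ℕ}
    (hf : ∀ s, HasDerivAt f (f' s) s) (h0 : f 0 = 0)
    (bound : ∀ s, 0 ≤ s → ‖f' s‖ ≤ s ^ k / k ! * C) {t : ℝ} (ht : 0 ≤ t) :
    ‖f t‖ ≤ t ^ (k + 1) / (k + 1)! * C :=
  image_norm_le_of_norm_deriv_right_le_deriv_boundary (a := 0) (b := t)
    (fun s _ => (hf s).continuousAt.continuousWithinAt) (fun s _ => (hf s).hasDerivWithinAt)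
    (by simp [h0]) (fun s => (hasDerivAt_pow_succ_div_factorial_succ k s).mul_const C)
    (fun s hs => bound s hs.1) ⟨ht, le_rfl⟩

end TaylorBound

section Conjugation

variable {𝔸 : Type*} [NormedRing 𝔸] [NormedAlgebra ℝ 𝔸] [CompleteSpace 𝔸]

theorem hasDerivAt_exp_smul_mul_mul_exp_neg_smul (S X : 𝔸) (t : ℝ) :
    HasDerivAt (fun s : ℝ => exp (s • S) * X * exp (-(s • S)))
      (exp (t • S) * ⁅S, X⁆ * exp (-(t • S))) t := by
  have hexp := (hasDerivAt_exp_smul_const S t).mul_const X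
  have hexp_neg := hasDerivAt_exp_smul_const' (-S) t
  simp only [smul_neg] at hexp_neg
  refine (hexp.mul hexp_neg).congr_deriv ?_
  rw [Ring.lie_def]
  noncomm_ring

theorem norm_exp_mul_mul_exp_neg [StarRing 𝔸] [CStarRing 𝔸] {S : 𝔸} (hS : S ∈ skewAdjoint 𝔸)
    (X : 𝔸) : ‖exp S * X * exp (-S)‖ = ‖X‖ := by
  let +nondep : NormedAlgebra ℚ 𝔸 := .restrictScalars ℚ ℝ 𝔸
  have hu := exp_mem_unitary_of_mem_skewAdjoint hS
  rw [← skewAdjoint.mem_iff.mp hS, ← star_exp,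
    CStarRing.norm_mul_mem_unitary _ (Unitary.star_mem hu), CStarRing.norm_mem_unitary_mul _ hu]

theorem norm_exp_smul_conj_sub_taylor_le [StarRing 𝔸] [CStarRing 𝔸] [StarModule ℝ 𝔸] {S : 𝔸}
    (hS : S ∈ skewAdjoint 𝔸) (k : ℕ) (X : 𝔸) {t : ℝ} (ht : 0 ≤ t) :
    ‖exp (t • S) * X * exp (-(t • S)) -
        ∑ p ∈ range k, (t ^ p / p !) • (fun Y => ⁅S, Y⁆)^[p] X‖ ≤
      t ^ k / k ! * ‖(fun Y => ⁅S, Y⁆)^[k] X‖ := by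
  induction k generalizing X t with
  | zero => simp [norm_exp_mul_mul_exp_neg (skewAdjoint.smul_mem t hS)]
  | succ k ih =>
    have hderiv (s : ℝ) := (hasDerivAt_exp_smul_mul_mul_exp_neg_smul S X s).sub
      (hasDerivAt_sum_range_pow_div_factorial_smul (fun p => (fun Y => ⁅S, Y⁆)^[p] X) k s)
    refine norm_le_pow_succ_div_factorial_of_norm_deriv_le hderiv ?_ (fun s hs => ?_) ht
    · simp [sum_range_succ']
    · simpa only [Function.iterate_succ_apply] using ih ⁅S, X⁆ hs

end Conjugation

theorem taylor_remainder_bound_general {n : ℕ} (S H : Matrix (Fin n) (Fin n) ℂ)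
    (hS : Sᴴ = -S) (k : ℕ) :
    ‖NormedSpace.exp S * H * NormedSpace.exp (-S) -
        ∑ p ∈ Finset.range k, ((p.factorial : ℂ))⁻¹ • (fun X => ⁅S, X⁆)^[p] H‖ ≤
      ((k.factorial : ℝ))⁻¹ * ‖(fun X => ⁅S, X⁆)^[k] H‖ := by
  have hS' : S ∈ skewAdjoint _ := skewAdjoint.mem_iff.mpr hS
  simpa [← Complex.coe_smul] using norm_exp_smul_conj_sub_taylor_le hS' k H zero_le_one

/-- **Taylor remainder bound for unitary conjugation.**
If `S` is anti-Hermitian and `H` any operator on a finite-dimensional Hilbert space,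
and `L(X) = [S,X]` denotes the commutator superoperator, then for every `k ≥ 1`,
the remainder of the Taylor expansion of the conjugation satisfies
`‖exp(S) H exp(-S) - ∑_{p<k} (1/p!) L^p(H)‖ ≤ (1/k!) ‖L^k(H)‖`
in the operator (spectral) norm. -/
theorem taylor_remainder_bound {n : ℕ} (S H : Matrix (Fin n) (Fin n) ℂ)
    (hS : Sᴴ = -S) (k : ℕ) (hk : 1 ≤ k) :
    ‖NormedSpace.exp S * H * NormedSpace.exp (-S) -
        ∑ p ∈ Finset.range k, ((p.factorial : ℂ))⁻¹ • (fun X => ⁅S, X⁆)^[p] H‖ ≤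
      ((k.factorial : ℝ))⁻¹ * ‖(fun X => ⁅S, X⁆)^[k] H‖ :=
  taylor_remainder_bound_general S H hS k
end

section
/- Let S be anti-Hermitian and H bounded. Then ‖ e^S H e^{-S} - H - [S,H] ‖ ≤ (1/2) ‖ [S,[S,H]] ‖. -/
open scoped Matrix.Norms.L2Operator
open Matrix

/-!
Along `f t = e^{tS} H e^{-tS}` one has `f' t = e^{tS} [S, H] e^{-tS}` and
`f'' t = e^{tS} [S, [S, H]] e^{-tS}`. Since `e^{tS}` is unitary, `‖f'' t‖ = ‖[S, [S, H]]‖`, and the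
second-order mean value inequality bounds `f 1 - f 0 - f' 0` by half of it.
-/

open NormedSpace Set

section SecondOrderMeanValue

variable {E : Type*} [NormedAddCommGroup E] [NormedSpace ℝ E] {f f' f'' : ℝ → E} {a b C : ℝ}

theorem norm_image_sub_sub_smul_deriv_le_of_norm_deriv2_le_segment
    (hf : ∀ x ∈ Icc a b, HasDerivWithinAt f (f' x) (Icc a b) x)
    (hf' : ∀ x ∈ Icc a b, HasDerivWithinAt f' (f'' x) (Icc a b) x)
    (bound : ∀ x ∈ Ico a b, ‖f'' x‖ ≤ C) :
    ∀ x ∈ Icc a b, ‖f x - f a - (x - a) • f' a‖ ≤ C / 2 * (x - a) ^ 2 := by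
  have hφ : ∀ x ∈ Icc a b,
      HasDerivWithinAt (fun y => f y - f a - (y - a) • f' a) (f' x - f' a) (Icc a b) x := by
    intro x hx
    exact (((hf x hx).sub_const (f a)).sub
      (((hasDerivWithinAt_id x _).sub_const a).smul_const (f' a))).congr_deriv (by simp)
  have hB : ∀ x, HasDerivAt (fun y => C / 2 * (y - a) ^ 2) (C * (x - a)) x := by
    intro x
    exact ((((hasDerivAt_id x).sub_const a).pow 2).const_mul (C / 2)).congr_deriv
      (by simp only [id, Nat.cast_ofNat]; ring)
  refine image_norm_le_of_norm_deriv_right_le_deriv_boundary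
    (fun x hx => (hφ x hx).continuousWithinAt)
    (fun x hx => (hφ x (Ico_subset_Icc_self hx)).mono_of_mem_nhdsWithin (Icc_mem_nhdsGE_of_mem hx))
    (by simp) hB
    (fun x hx => norm_image_sub_le_of_norm_deriv_le_segment' hf' bound x (Ico_subset_Icc_self hx))

end SecondOrderMeanValue

section ExpConj

variable {A : Type*} [NormedRing A] [NormedAlgebra ℝ A]

noncomputable def expConj (S X : A) (t : ℝ) : A := exp (t • S) * X * exp (t • -S)

@[simp]
theorem expConj_zero (S X : A) : expConj S X 0 = X := by
  simp [expConj]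

@[simp]
theorem expConj_one (S X : A) : expConj S X 1 = exp S * X * exp (-S) := by
  simp [expConj]

theorem hasDerivAt_expConj [CompleteSpace A] (S X : A) (t : ℝ) :
    HasDerivAt (expConj S X) (expConj S ⁅S, X⁆ t) t := by
  refine (((hasDerivAt_exp_smul_const' S t).mul_const X).mul
    (hasDerivAt_exp_smul_const (-S) t)).congr_deriv ?_
  rw [expConj, Ring.lie_def, ((Commute.refl S).smul_right t).exp_right.eq, mul_neg,
    ← ((Commute.refl S).neg_right.smul_right t).exp_right.eq]
  noncomm_ring

theorem norm_expConj [CompleteSpace A] [StarRing A] [CStarRing A] [StarModule ℝ A] {S : A}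
    (hS : S ∈ skewAdjoint A) (X : A) (t : ℝ) : ‖expConj S X t‖ = ‖X‖ := by
  let +nondep : NormedAlgebra ℚ A := .restrictScalars ℚ ℝ A
  have hU (s : ℝ) : exp (s • S) ∈ unitary A :=
    exp_mem_unitary_of_mem_skewAdjoint (skewAdjoint.smul_mem s hS)
  rw [expConj, smul_neg, ← neg_smul, CStarRing.norm_mul_mem_unitary _ (hU _),
    CStarRing.norm_mem_unitary_mul _ (hU _)]

theorem norm_exp_mul_mul_exp_neg_sub_sub_lie_le [CompleteSpace A] [StarRing A] [CStarRing A]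
    [StarModule ℝ A] {S : A} (hS : S ∈ skewAdjoint A) (H : A) :
    ‖exp S * H * exp (-S) - H - ⁅S, H⁆‖ ≤ 1 / 2 * ‖⁅S, ⁅S, H⁆⁆‖ := by
  have := norm_image_sub_sub_smul_deriv_le_of_norm_deriv2_le_segment
    (fun t _ => (hasDerivAt_expConj S H t).hasDerivWithinAt)
    (fun t _ => (hasDerivAt_expConj S ⁅S, H⁆ t).hasDerivWithinAt)
    (fun t _ => (norm_expConj hS ⁅S, ⁅S, H⁆⁆ t).le) 1 (right_mem_Icc.2 zero_le_one)
  simpa [div_eq_inv_mul] using this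

end ExpConj

/-- If `S` is anti-Hermitian and `H` any operator on a finite-dimensional Hilbert space,
then `‖exp(S) H exp(-S) - H - [S,H]‖ ≤ (1/2) ‖[S,[S,H]]‖` in the operator norm
(the `k = 2` case of the Taylor remainder bound for unitary conjugation). -/
theorem conj_second_order_remainder {n : ℕ} (S H : Matrix (Fin n) (Fin n) ℂ)
    (hS : Sᴴ = -S) :
    ‖NormedSpace.exp S * H * NormedSpace.exp (-S) - H - ⁅S, H⁆‖ ≤
      (1 / 2 : ℝ) * ‖⁅S, ⁅S, H⁆⁆‖ :=
  norm_exp_mul_mul_exp_neg_sub_sub_lie_le (skewAdjoint.mem_iff.2 hS) H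
end

section
/- Ground-state energy of the subdivision gadget: in the subdivision-gadget setting with 0 < J and Δ = J ε^{-2} for some 0 < ε ≤ 1, the smallest eigenvalue of H = Δ|1⟩⟨1|⊗I + √(ΔJ/2) X⊗(-A+B) + (J/2)I⊗(A²+B²) differs from the smallest eigenvalue of J·(A⊗B) by at most C·εJ for an absolute constant C. -/
open scoped Matrix.Norms.L2Operator Kronecker
open Matrix

noncomputable section

/-- Projector `|1⟩⟨1|` on the mediator qubit. -/
def P1 : Matrix (Fin 2) (Fin 2) ℂ := !![0, 0; 0, 1]

/-- Pauli `X` on the mediator qubit. -/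
def pX : Matrix (Fin 2) (Fin 2) ℂ := !![0, 1; 1, 0]

variable {a b : Type} [Fintype a] [DecidableEq a] [Fintype b] [DecidableEq b]

/-- `A` viewed as an operator on `H_A ⊗ H_B`. -/
def extA (A : Matrix a a ℂ) : Matrix (a × b) (a × b) ℂ := A ⊗ₖ (1 : Matrix b b ℂ)

/-- `B` viewed as an operator on `H_A ⊗ H_B`. -/
def extB (B : Matrix b b ℂ) : Matrix (a × b) (a × b) ℂ := (1 : Matrix a a ℂ) ⊗ₖ B

/-- The subdivision-gadget simulator Hamiltonian
`H = Δ|1⟩⟨1|⊗I + √(ΔJ/2) X⊗(-A+B) + (J/2) I⊗(A²+B²)` on `ℂ² ⊗ H_A ⊗ H_B`. -/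
def gadgetH (A : Matrix a a ℂ) (B : Matrix b b ℂ) (J Δ : ℝ) :
    Matrix (Fin 2 × a × b) (Fin 2 × a × b) ℂ :=
  (Δ : ℂ) • (P1 ⊗ₖ (1 : Matrix (a × b) (a × b) ℂ)) +
    ((Real.sqrt (Δ * J / 2) : ℝ) : ℂ) • (pX ⊗ₖ (-(extA A) + extB B)) +
    ((J / 2 : ℝ) : ℂ) • ((1 : Matrix (Fin 2) (Fin 2) ℂ) ⊗ₖ ((extA A) ^ 2 + (extB B) ^ 2))

/-- The smallest (real) point of the spectrum of a matrix; for a Hermitian matrix on a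
nonempty finite-dimensional space this is the smallest eigenvalue. -/
def lamMin {m : Type*} [Fintype m] [DecidableEq m] (M : Matrix m m ℂ) : ℝ :=
  sInf {x : ℝ | (x : ℂ) ∈ spectrum ℂ M}

/-! Diagonalising `A = U diag(α) U*` and `B = V diag(β) V*` and conjugating `H` by the unitary
`1 ⊗ U ⊗ V` splits `H` into one `2 × 2` block per pair of eigenvalues `(αᵢ, βⱼ)`, namely
`(J/2)(α² + β²) + √(ΔJ/2)(β - α) X + Δ|1⟩⟨1|`. With `y = (J/2)(β - α)²` its ground energy is
`Jαβ + y + Δ/2 - √(Δ²/4 + Δy)`, which lies in `[Jαβ, Jαβ + y²/Δ]`; and `y ≤ 2J` gives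
`y²/Δ ≤ 4J²/Δ = 4ε²J ≤ 4εJ`. Since the eigenvalues of `J·(A ⊗ B)` are exactly the `Jαβ`, the two
minima over all pairs differ by at most `4εJ`. -/

open Unitary

theorem sInf_range_union_range_of_le {ι : Type*} [Finite ι] {f g : ι → ℝ} (hfg : f ≤ g) :
    sInf (Set.range f ∪ Set.range g) = ⨅ i, f i := by
  rcases isEmpty_or_nonempty ι with _ | _
  · simp [Set.range_eq_empty]
  · rw [csInf_union (Set.finite_range f).bddBelow (Set.range_nonempty f)
      (Set.finite_range g).bddBelow (Set.range_nonempty g)]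
    exact inf_eq_left.2 (ciInf_mono (Set.finite_range f).bddBelow hfg)

theorem abs_ciInf_sub_ciInf_le {ι : Type*} [Finite ι] {f g : ι → ℝ} {c : ℝ} (hc : 0 ≤ c)
    (hfg : ∀ i, |f i - g i| ≤ c) : |(⨅ i, f i) - ⨅ i, g i| ≤ c := by
  rcases isEmpty_or_nonempty ι with _ | _
  · simpa using hc
  have hf i : ⨅ i, f i ≤ f i := ciInf_le (Set.finite_range f).bddBelow i
  have hg i : ⨅ i, g i ≤ g i := ciInf_le (Set.finite_range g).bddBelow i
  have hfg' i := abs_sub_le_iff.1 (hfg i)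
  exact abs_sub_le_iff.2 ⟨sub_le_comm.1 (le_ciInf fun i ↦ by linarith [hf i, hfg' i]),
    sub_le_comm.1 (le_ciInf fun i ↦ by linarith [hg i, hfg' i])⟩

theorem sqrt_sq_div_four_add_mul_mem_Icc {Δ y : ℝ} (hΔ : 0 < Δ) (hy : 0 ≤ y) :
    √(Δ ^ 2 / 4 + Δ * y) ∈ Set.Icc (Δ / 2 + y - y ^ 2 / Δ) (Δ / 2 + y) := by
  set s := √(Δ ^ 2 / 4 + Δ * y)
  have hs0 : 0 ≤ s := Real.sqrt_nonneg _
  have hs2 : s ^ 2 = Δ ^ 2 / 4 + Δ * y := Real.sq_sqrt (by positivity)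
  have hq : y ^ 2 / Δ * Δ = y ^ 2 := div_mul_cancel₀ _ hΔ.ne'
  have hup : s ≤ Δ / 2 + y := by nlinarith
  have hlow : Δ / 2 ≤ s := by nlinarith
  -- `(s - Δ/2)(s + Δ/2) = Δy` and `s + Δ/2 ≤ Δ + y`
  have hprod : Δ * y ≤ (s - Δ / 2) * (Δ + y) := by nlinarith
  refine ⟨?_, hup⟩
  have : (y - y ^ 2 / Δ) * (Δ + y) ≤ (s - Δ / 2) * (Δ + y) := by
    nlinarith [div_nonneg (sq_nonneg y) hΔ.le]
  linarith [le_of_mul_le_mul_right this (by linarith)]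

namespace Matrix

theorem spectrum_blockDiagonal {𝕜 n o : Type*} [Field 𝕜] [Fintype n] [DecidableEq n]
    [Fintype o] [DecidableEq o] (M : o → Matrix n n 𝕜) :
    spectrum 𝕜 (blockDiagonal M) = ⋃ k, spectrum 𝕜 (M k) := by
  ext x
  have hshift : algebraMap 𝕜 _ x - blockDiagonal M =
      blockDiagonal fun k ↦ algebraMap 𝕜 _ x - M k := by
    ext ⟨i, k⟩ ⟨j, l⟩
    by_cases hij : i = j <;> by_cases hkl : k = l <;>
      simp [blockDiagonal_apply, algebraMap_eq_diagonal, hij, hkl]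
  simp only [spectrum.mem_iff, hshift, isUnit_iff_isUnit_det, det_blockDiagonal,
    isUnit_iff_ne_zero, Finset.prod_ne_zero_iff, not_forall, Set.mem_iUnion, Finset.mem_univ,
    true_implies]

theorem IsHermitian.abs_eigenvalues_le_norm {m : Type*} [Fintype m] [DecidableEq m]
    {A : Matrix m m ℂ} (hA : A.IsHermitian) (i : m) : |hA.eigenvalues i| ≤ ‖A‖ := by
  have : Nonempty m := ⟨i⟩
  simpa using spectrum.norm_le_norm_of_mem
    (spectrum.algebraMap_mem ℂ (hA.eigenvalues_mem_spectrum_real i))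

section Kronecker

variable {R m n : Type*} [CommRing R] [StarRing R] [Fintype m] [DecidableEq m] [Fintype n]
  [DecidableEq n]

def unitaryKronecker (U : unitary (Matrix m m R)) (V : unitary (Matrix n n R)) :
    unitary (Matrix (m × n) (m × n) R) :=
  ⟨U ⊗ₖ V, kronecker_mem_unitary U.2 V.2⟩

theorem conjStarAlgAut_kronecker (U : unitary (Matrix m m R)) (V : unitary (Matrix n n R))
    (M : Matrix m m R) (N : Matrix n n R) :
    conjStarAlgAut R (Matrix (m × n) (m × n) R) (unitaryKronecker U V) (M ⊗ₖ N) =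
      conjStarAlgAut R (Matrix m m R) U M ⊗ₖ conjStarAlgAut R (Matrix n n R) V N := by
  simp only [conjStarAlgAut_apply, unitaryKronecker, star_eq_conjTranspose,
    conjTranspose_kronecker, mul_kronecker_mul]

end Kronecker

end Matrix

section LamMin

variable {m : Type*} [Fintype m] [DecidableEq m]

theorem lamMin_conjStarAlgAut (U : unitary (Matrix m m ℂ)) (M : Matrix m m ℂ) :
    lamMin (conjStarAlgAut ℂ _ U M) = lamMin M := by
  rw [lamMin, lamMin, conjStarAlgAut_apply, spectrum_star_right_conjugate]

theorem lamMin_diagonal (f : m → ℝ) : lamMin (diagonal (RCLike.ofReal ∘ f)) = ⨅ i, f i := by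
  rw [lamMin, spectrum_diagonal, iInf]
  congr 1
  ext x
  simp

end LamMin

def qubitBlock (c w d : ℝ) : Matrix (Fin 2) (Fin 2) ℂ := (c : ℂ) • 1 + (w : ℂ) • pX + (d : ℂ) • P1

theorem ofReal_mem_spectrum_qubitBlock_iff (c w d x : ℝ) :
    (x : ℂ) ∈ spectrum ℂ (qubitBlock c w d) ↔
      x = c + d / 2 - √(d ^ 2 / 4 + w ^ 2) ∨ x = c + d / 2 + √(d ^ 2 / 4 + w ^ 2) := by
  have hs : (√(d ^ 2 / 4 + w ^ 2) : ℂ) ^ 2 = (d : ℂ) ^ 2 / 4 + (w : ℂ) ^ 2 := by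
    exact_mod_cast Real.sq_sqrt (by positivity : 0 ≤ d ^ 2 / 4 + w ^ 2)
  have hshift : algebraMap ℂ _ (x : ℂ) - qubitBlock c w d =
      !![(x - c : ℂ), -w; -w, x - c - d] := by
    ext i j
    fin_cases i <;> fin_cases j <;> simp [qubitBlock, P1, pX, algebraMap_eq_diagonal, sub_sub]
  have hcharpoly : (algebraMap ℂ _ (x : ℂ) - qubitBlock c w d).det =
      (x - (c + d / 2 - √(d ^ 2 / 4 + w ^ 2)) : ℂ) * (x - (c + d / 2 + √(d ^ 2 / 4 + w ^ 2))) := by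
    rw [hshift, det_fin_two_of]
    linear_combination hs
  rw [spectrum.mem_iff, isUnit_iff_isUnit_det, isUnit_iff_ne_zero, not_not, hcharpoly,
    mul_eq_zero, sub_eq_zero, sub_eq_zero]
  norm_cast

theorem lamMin_blockDiagonal_qubitBlock {ι : Type*} [Fintype ι] [DecidableEq ι]
    (c w : ι → ℝ) (d : ℝ) :
    lamMin (blockDiagonal fun i ↦ qubitBlock (c i) (w i) d) =
      ⨅ i, (c i + d / 2 - √(d ^ 2 / 4 + w i ^ 2)) := by
  have hspec : {x : ℝ | (x : ℂ) ∈ spectrum ℂ (blockDiagonal fun i ↦ qubitBlock (c i) (w i) d)} =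
      Set.range (fun i ↦ c i + d / 2 - √(d ^ 2 / 4 + w i ^ 2)) ∪
        Set.range (fun i ↦ c i + d / 2 + √(d ^ 2 / 4 + w i ^ 2)) := by
    ext x
    simp [spectrum_blockDiagonal, ofReal_mem_spectrum_qubitBlock_iff, exists_or, eq_comm]
  rw [lamMin, hspec, sInf_range_union_range_of_le]
  intro i
  linarith [Real.sqrt_nonneg (d ^ 2 / 4 + w i ^ 2)]

section Gadget

theorem conjStarAlgAut_extA (U : unitary (Matrix a a ℂ)) (V : unitary (Matrix b b ℂ))
    (A : Matrix a a ℂ) :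
    conjStarAlgAut ℂ (Matrix (a × b) (a × b) ℂ) (unitaryKronecker U V) (extA A) =
      extA (conjStarAlgAut ℂ _ U A) := by
  rw [extA, extA, conjStarAlgAut_kronecker, map_one]

theorem conjStarAlgAut_extB (U : unitary (Matrix a a ℂ)) (V : unitary (Matrix b b ℂ))
    (B : Matrix b b ℂ) :
    conjStarAlgAut ℂ (Matrix (a × b) (a × b) ℂ) (unitaryKronecker U V) (extB B) =
      extB (conjStarAlgAut ℂ _ V B) := by
  rw [extB, extB, conjStarAlgAut_kronecker, map_one]

theorem gadgetH_conjStarAlgAut (U : unitary (Matrix a a ℂ)) (V : unitary (Matrix b b ℂ))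
    (A : Matrix a a ℂ) (B : Matrix b b ℂ) (J Δ : ℝ) :
    gadgetH (conjStarAlgAut ℂ _ U A) (conjStarAlgAut ℂ _ V B) J Δ =
      conjStarAlgAut ℂ (Matrix (Fin 2 × a × b) (Fin 2 × a × b) ℂ)
        (unitaryKronecker 1 (unitaryKronecker U V)) (gadgetH A B J Δ) := by
  simp only [gadgetH, map_add, map_smul, conjStarAlgAut_kronecker, map_one, StarAlgEquiv.one_apply,
    map_neg, map_pow, conjStarAlgAut_extA, conjStarAlgAut_extB]

theorem gadgetH_diagonal (f : a → ℝ) (g : b → ℝ) (J Δ : ℝ) :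
    gadgetH (diagonal (RCLike.ofReal ∘ f)) (diagonal (RCLike.ofReal ∘ g)) J Δ =
      blockDiagonal fun p : a × b ↦
        qubitBlock (J / 2 * (f p.1 ^ 2 + g p.2 ^ 2)) (√(Δ * J / 2) * (g p.2 - f p.1)) Δ := by
  have hA : (extA (diagonal (RCLike.ofReal ∘ f)) : Matrix (a × b) (a × b) ℂ) =
      diagonal fun p ↦ (f p.1 : ℂ) := by
    rw [extA, ← diagonal_one, diagonal_kronecker_diagonal]
    simp
  have hB : (extB (diagonal (RCLike.ofReal ∘ g)) : Matrix (a × b) (a × b) ℂ) =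
      diagonal fun p ↦ (g p.2 : ℂ) := by
    rw [extB, ← diagonal_one, diagonal_kronecker_diagonal]
    simp
  have h1 : (1 : Matrix (a × b) (a × b) ℂ) = diagonal fun _ ↦ 1 := diagonal_one.symm
  rw [gadgetH, hA, hB, neg_add_eq_sub, diagonal_sub, diagonal_pow, diagonal_pow, diagonal_add, h1]
  simp only [kronecker_diagonal]
  rw [← blockDiagonal_smul, ← blockDiagonal_smul, ← blockDiagonal_smul, ← blockDiagonal_add,
    ← blockDiagonal_add]
  congr 1
  funext p
  simp only [Pi.add_apply, Pi.smul_apply, Pi.pow_apply, op_smul_eq_smul, smul_smul, one_smul,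
    qubitBlock]
  push_cast
  module

/-- Ground energy of `H` on the joint eigenspace of `A` and `B` for the eigenvalues `α` and `β`. -/
def gadgetSectorEnergy (J Δ α β : ℝ) : ℝ :=
  J / 2 * (α ^ 2 + β ^ 2) + Δ / 2 - √(Δ ^ 2 / 4 + (√(Δ * J / 2) * (β - α)) ^ 2)

theorem lamMin_gadgetH {A : Matrix a a ℂ} {B : Matrix b b ℂ} (hA : A.IsHermitian)
    (hB : B.IsHermitian) (J Δ : ℝ) :
    lamMin (gadgetH A B J Δ) =
      ⨅ p : a × b, gadgetSectorEnergy J Δ (hA.eigenvalues p.1) (hB.eigenvalues p.2) := by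
  conv_lhs => rw [hA.spectral_theorem, hB.spectral_theorem]
  rw [gadgetH_conjStarAlgAut, lamMin_conjStarAlgAut, gadgetH_diagonal,
    lamMin_blockDiagonal_qubitBlock]
  rfl

theorem lamMin_smul_kronecker {A : Matrix a a ℂ} {B : Matrix b b ℂ} (hA : A.IsHermitian)
    (hB : B.IsHermitian) (J : ℝ) :
    lamMin ((J : ℂ) • (A ⊗ₖ B)) = ⨅ p : a × b, J * hA.eigenvalues p.1 * hB.eigenvalues p.2 := by
  conv_lhs => rw [hA.spectral_theorem, hB.spectral_theorem, ← conjStarAlgAut_kronecker,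
    ← map_smul, lamMin_conjStarAlgAut, diagonal_kronecker_diagonal, ← diagonal_smul]
  rw [← lamMin_diagonal]
  congr 2
  ext p
  simp only [Function.comp_apply, Pi.smul_apply, smul_eq_mul, RCLike.ofReal_eq_complex_ofReal]
  push_cast
  ring

theorem abs_gadgetSectorEnergy_sub_le {J ε α β : ℝ} (hJ : 0 < J) (hε : 0 < ε) (hε1 : ε ≤ 1)
    (hα : |α| ≤ 1) (hβ : |β| ≤ 1) :
    |gadgetSectorEnergy J (J * ε⁻¹ ^ 2) α β - J * α * β| ≤ 4 * ε * J := by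
  set Δ := J * ε⁻¹ ^ 2 with hΔ
  have hΔpos : 0 < Δ := by positivity
  set y := J / 2 * (β - α) ^ 2 with hy
  have hy0 : 0 ≤ y := by positivity
  have hy2 : y ≤ 2 * J := by
    have : (β - α) ^ 2 ≤ 4 := by nlinarith [abs_le.1 hα, abs_le.1 hβ]
    nlinarith
  have henergy : gadgetSectorEnergy J Δ α β =
      J * α * β + (Δ / 2 + y - √(Δ ^ 2 / 4 + Δ * y)) := by
    have hw : (√(Δ * J / 2) * (β - α)) ^ 2 = Δ * y := by
      rw [mul_pow, Real.sq_sqrt (by positivity)]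
      ring
    rw [gadgetSectorEnergy, hw]
    ring
  have hq : y ^ 2 / Δ ≤ 4 * ε * J := by
    have hεinv : 1 ≤ ε⁻¹ := one_le_inv₀ hε |>.2 hε1
    have : 4 * ε * J * Δ = 4 * J ^ 2 * ε⁻¹ := by
      rw [hΔ]
      field_simp
    rw [div_le_iff₀ hΔpos, this]
    nlinarith
  obtain ⟨hlow, hup⟩ := sqrt_sq_div_four_add_mul_mem_Icc hΔpos hy0
  rw [henergy, add_sub_cancel_left, abs_le]
  constructor <;> linarith

end Gadget

/-- **Ground-state energy of the subdivision gadget.** There is an absolute constant `C > 0`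
such that, in the subdivision-gadget setting with `0 < J`, `0 < ε ≤ 1` and `Δ = J ε⁻²`,
the smallest eigenvalue of the simulator Hamiltonian `H` differs from the smallest eigenvalue
of the target `J·(A⊗B)` by at most `C·ε·J`. -/
theorem subdivision_gadget_ground_energy :
    ∃ C : ℝ, 0 < C ∧
      ∀ (a b : Type) (_ : Fintype a) (_ : DecidableEq a) (_ : Fintype b) (_ : DecidableEq b)
        (A : Matrix a a ℂ) (B : Matrix b b ℂ),
        A.IsHermitian → B.IsHermitian → ‖A‖ ≤ 1 → ‖B‖ ≤ 1 →
        ∀ (J ε : ℝ), 0 < J → 0 < ε → ε ≤ 1 →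
          |lamMin (gadgetH A B J (J * ε⁻¹ ^ 2)) - lamMin ((J : ℂ) • (A ⊗ₖ B))| ≤ C * ε * J := by
  refine ⟨4, by norm_num, fun a b _ _ _ _ A B hA hB hnA hnB J ε hJ hε hε1 ↦ ?_⟩
  rw [lamMin_gadgetH hA hB, lamMin_smul_kronecker hA hB]
  exact abs_ciInf_sub_ciInf_le (by positivity) fun p ↦ abs_gadgetSectorEnergy_sub_le hJ hε hε1
    ((hA.abs_eigenvalues_le_norm p.1).trans hnA) ((hB.abs_eigenvalues_le_norm p.2).trans hnB)

end
end

section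
/- Lower bound transfer through an approximate unitary: let H be Hermitian, S anti-Hermitian, and T Hermitian on a finite-dimensional Hilbert space, and suppose e^S H e^{-S} ≥ T - ε₁ I and ‖[S, T]‖ ≤ ε₂. Then H ≥ T - (ε₁ + ε₂) I. -/
/-!
Conjugating `T - ε₁ ≤ e^S H e^{-S}` by the unitary `e^S` gives `e^{-S} T e^S - ε₁ ≤ H`.
The path `t ↦ e^{-tS} T e^{tS}` has derivative `e^{-tS} [T, S] e^{tS}`, of norm `‖[S, T]‖`,
so `‖e^{-S} T e^S - T‖ ≤ ‖[S, T]‖ ≤ ε₂`; for self-adjoint elements this norm bound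
gives `T - ε₂ ≤ e^{-S} T e^S`.
-/

open NormedSpace

theorem norm_exp_neg_mul_mul_exp_sub_le {A : Type*} [NormedRing A] [StarRing A] [CStarRing A]
    [NormedAlgebra ℝ A] [StarModule ℝ A] [CompleteSpace A] {S : A} (hS : S ∈ skewAdjoint A)
    (T : A) : ‖exp (-S) * T * exp S - T‖ ≤ ‖⁅S, T⁆‖ := by
  -- Mathlib's algebraic facts about `exp` are stated for normed `ℚ`-algebras.
  let _ : NormedAlgebra ℚ A := .restrictScalars ℚ ℝ A
  set f : ℝ → A := fun t => exp (t • -S) * T * exp (t • S)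
  set f' : ℝ → A := fun t => exp (t • -S) * ⁅T, S⁆ * exp (t • S)
  have hf : ∀ t, HasDerivAt f (f' t) t := fun t => by
    refine (((hasDerivAt_exp_smul_const (-S) t).mul_const T).mul
      (hasDerivAt_exp_smul_const' S t)).congr_deriv ?_
    simp only [f', Ring.lie_def]
    noncomm_ring
  have hf' : ∀ t, ‖f' t‖ = ‖⁅S, T⁆‖ := fun t => by
    have hu : exp (t • S) ∈ unitary A :=
      exp_mem_unitary_of_mem_skewAdjoint (skewAdjoint.smul_mem t hS)
    have hu' : exp (t • -S) ∈ unitary A := by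
      simpa [star_exp, skewAdjoint.mem_iff.mp hS] using Unitary.star_mem hu
    rw [CStarRing.norm_mul_mem_unitary _ hu, CStarRing.norm_mem_unitary_mul _ hu', Ring.lie_def,
      Ring.lie_def, norm_sub_rev]
  simpa [f] using Convex.norm_image_sub_le_of_norm_hasDerivWithin_le
    (fun t _ => (hf t).hasDerivWithinAt) (fun t _ => (hf' t).le) convex_univ
    (Set.mem_univ 0) (Set.mem_univ 1)

section CStarAlgebra

variable {A : Type*} [CStarAlgebra A] [PartialOrder A] [StarOrderedRing A]

theorem sub_algebraMap_le_of_norm_sub_le {a b : A} (ha : IsSelfAdjoint a) (hb : IsSelfAdjoint b)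
    {c : ℝ} (h : ‖a - b‖ ≤ c) : b - algebraMap ℝ A c ≤ a :=
  calc b - algebraMap ℝ A c ≤ b - algebraMap ℝ A ‖a - b‖ := sub_le_sub_left (algebraMap_mono A h) b
    _ ≤ a := by
      have := (ha.sub hb).neg_algebraMap_norm_le_self
      rwa [neg_le_sub_iff_le_add, ← sub_le_iff_le_add', sub_le_comm] at this

theorem sub_algebraMap_le_of_le_conj_exp {S H T : A} (hS : S ∈ skewAdjoint A)
    (hT : IsSelfAdjoint T) {ε₁ ε₂ : ℝ} (hge : T - algebraMap ℝ A ε₁ ≤ exp S * H * exp (-S))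
    (hcomm : ‖⁅S, T⁆‖ ≤ ε₂) : T - algebraMap ℝ A (ε₁ + ε₂) ≤ H := by
  let _ : NormedAlgebra ℚ A := .restrictScalars ℚ ℂ A
  have hu : exp S ∈ unitary A := exp_mem_unitary_of_mem_skewAdjoint hS
  have hstar : star (exp S) = exp (-S) := by rw [star_exp, skewAdjoint.mem_iff.mp hS]
  have hconj : exp (-S) * T * exp S - algebraMap ℝ A ε₁ ≤ H := by
    have h₁ : exp (-S) * exp S = 1 := hstar ▸ Unitary.star_mul_self_of_mem hu
    have hH : exp (-S) * (exp S * H * exp (-S)) * exp S = H := by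
      simp only [← mul_assoc, h₁, one_mul]
      simp only [mul_assoc, h₁, mul_one]
    have hT' : exp (-S) * (T - algebraMap ℝ A ε₁) * exp S =
        exp (-S) * T * exp S - algebraMap ℝ A ε₁ := by
      rw [mul_sub, sub_mul, ← Algebra.commutes, mul_assoc (algebraMap ℝ A ε₁), h₁, mul_one]
    simpa only [hstar, hH, hT'] using star_left_conjugate_le_conjugate hge (exp S)
  have hnear : T - algebraMap ℝ A ε₂ ≤ exp (-S) * T * exp S := by
    refine sub_algebraMap_le_of_norm_sub_le ?_ hT
      ((norm_exp_neg_mul_mul_exp_sub_le hS T).trans hcomm)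
    exact hstar ▸ hT.conjugate' _
  calc T - algebraMap ℝ A (ε₁ + ε₂) = T - algebraMap ℝ A ε₂ - algebraMap ℝ A ε₁ := by
        rw [map_add]; abel
    _ ≤ exp (-S) * T * exp S - algebraMap ℝ A ε₁ := sub_le_sub_right hnear _
    _ ≤ H := hconj

end CStarAlgebra

open scoped Matrix.Norms.L2Operator ComplexOrder MatrixOrder
open Matrix

theorem lower_bound_transfer_general {n : ℕ} (S H T : Matrix (Fin n) (Fin n) ℂ)
    (hS : Sᴴ = -S) (hT : T.IsHermitian)
    (ε₁ ε₂ : ℝ)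
    (hge : (NormedSpace.exp S * H * NormedSpace.exp (-S) -
        (T - (ε₁ : ℂ) • (1 : Matrix (Fin n) (Fin n) ℂ))).PosSemidef)
    (hcomm : ‖⁅S, T⁆‖ ≤ ε₂) :
    (H - (T - ((ε₁ + ε₂ : ℝ) : ℂ) • (1 : Matrix (Fin n) (Fin n) ℂ))).PosSemidef := by
  have hsmul (ε : ℝ) : (ε : ℂ) • (1 : Matrix (Fin n) (Fin n) ℂ) = algebraMap ℝ _ ε := by
    rw [Algebra.algebraMap_eq_smul_one, Complex.coe_smul]
  rw [hsmul, ← Matrix.le_iff] at hge ⊢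
  exact sub_algebraMap_le_of_le_conj_exp (skewAdjoint.mem_iff.mpr hS) hT.isSelfAdjoint hge hcomm

/-- **Lower bound transfer through an approximate unitary.** Let `H`, `T` be Hermitian and
`S` anti-Hermitian, and suppose `e^S H e^{-S} ≥ T - ε₁ I` (positive semidefiniteness of the
difference) and `‖[S,T]‖ ≤ ε₂`. Then `H ≥ T - (ε₁ + ε₂) I`. -/
theorem lower_bound_transfer {n : ℕ} (S H T : Matrix (Fin n) (Fin n) ℂ)
    (hH : H.IsHermitian) (hS : Sᴴ = -S) (hT : T.IsHermitian)
    (ε₁ ε₂ : ℝ)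
    (hge : (NormedSpace.exp S * H * NormedSpace.exp (-S) -
        (T - (ε₁ : ℂ) • (1 : Matrix (Fin n) (Fin n) ℂ))).PosSemidef)
    (hcomm : ‖⁅S, T⁆‖ ≤ ε₂) :
    (H - (T - ((ε₁ + ε₂ : ℝ) : ℂ) • (1 : Matrix (Fin n) (Fin n) ℂ))).PosSemidef :=
  lower_bound_transfer_general S H T hS hT ε₁ ε₂ hge hcomm
end
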